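/- There exist a set X with exactly 9 elements, a map f : X → X, and a point x₀ ∈ X such that the cardinality of f⁻²(x₀) is strictly greater than 2³ = 8, the cardinality of f⁻¹(x) is at most 2 for every x ≠ x₀, and yet f has an iterative square root, i.e., there exists g : X → X with g ∘ g = f. (In this example f(x₀) = x₀; e.g., take f the constant map with value x₀ on a 9-element set. Hence the hypothesis f(x₀) ≠ x₀ in the non-existence criterion for iterative roots cannot be dropped.) -/
import Mathlib

/-- **Remark 2.** There is a 9-element set `X`, a map `f : X → X` and a point
`x₀` with `#f⁻²(x₀) > 2³ = 8` and `#f⁻¹(x) ≤ 2` for all `x ≠ x₀`, yet `f` has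
an iterative square root. (Hence the hypothesis `f(x₀) ≠ x₀` in the
non-existence criterion cannot be dropped.) -/
theorem exists_nine_element_counterexample :
    ∃ (X : Type) (_ : Fintype X), Fintype.card X = 9 ∧
      ∃ (f : X → X) (x₀ : X),
        (8 : Cardinal) < Cardinal.mk ((fun y => f (f y)) ⁻¹' {x₀}) ∧
        (∀ x : X, x ≠ x₀ → Cardinal.mk (f ⁻¹' {x}) ≤ (2 : Cardinal)) ∧
        ∃ g : X → X, g ∘ g = f := by
  refine ⟨Fin 9, inferInstance, by simp, fun _ => 0, 0, ?_, ?_, fun _ => 0, rfl⟩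
  · have : ((fun y => (0 : Fin 9)) ⁻¹' {0} : Set (Fin 9)) = Set.univ := by
      ext y; simp
    rw [this, Cardinal.mk_univ, Cardinal.mk_fintype]
    norm_num
  · intro x hx
    have : ((fun _ => (0 : Fin 9)) ⁻¹' {x} : Set (Fin 9)) = ∅ := by
      ext y; simp [hx.symm]
    rw [this]
    simp
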